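/- If there exists a nonzero v in the span of u_1, …, u_k with P_h v = 0, then μ_k ≤ C_h². -/

import Mathlib

open Module

/-- If some nonzero `v` in the span of the first `k` eigenfunctions satisfies
    `P_h v = 0`, then `μ_k ≤ C_h²`. -/
theorem mu_k_le_Ch_sq_of_kernel
    {Z W : Type*} [AddCommGroup Z] [Module ℝ Z]
    [NormedAddCommGroup W] [InnerProductSpace ℝ W]
    (a : Z →ₗ[ℝ] Z →ₗ[ℝ] ℝ)
    (ha_symm : ∀ u v : Z, a u v = a v u)
    (ha_psd : ∀ v : Z, 0 ≤ a v v)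
    (γ : Z →ₗ[ℝ] W)
    (Vh : Submodule ℝ Z) [FiniteDimensional ℝ Vh]
    (ha_pos : ∀ v ∈ Vh, v ≠ 0 → 0 < a v v)
    (Ph : Z →ₗ[ℝ] Z)
    (hPh_mem : ∀ u : Z, Ph u ∈ Vh)
    (hPh_orth : ∀ u : Z, ∀ vh ∈ Vh, a (u - Ph u) vh = 0)
    (Ch : ℝ) (hCh : 0 ≤ Ch)
    (hCh_bound : ∀ v : Z, ‖γ (v - Ph v)‖ ≤ Ch * Real.sqrt (a (v - Ph v) (v - Ph v)))
    (k : ℕ) (hk1 : 1 ≤ k) (hkd : k ≤ finrank ℝ Vh)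
    (μ : Fin k → ℝ) (hμ_anti : Antitone μ) (hμ_nonneg : ∀ i, 0 ≤ μ i)
    (u : Fin k → Z)
    (h_orth : ∀ i j, a (u i) (u j) = if i = j then (1 : ℝ) else 0)
    (h_eig : ∀ i j, (inner ℝ (γ (u i)) (γ (u j)) : ℝ) = if i = j then μ i else 0)
    (v : Z) (hv_mem : v ∈ Submodule.span ℝ (Set.range u))
    (hv_ne : v ≠ 0) (hv_ker : Ph v = 0) :
    μ ⟨k - 1, by omega⟩ ≤ Ch ^ 2 := by
  obtain ⟨c, hc⟩ := (Submodule.mem_span_range_iff_exists_fun ℝ).mp hv_mem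
  -- a v v = Σ c i ^ 2
  have havv : a v v = ∑ i, c i ^ 2 := by
    rw [← hc]
    simp only [map_sum, map_smul, LinearMap.sum_apply, LinearMap.smul_apply, smul_eq_mul,
      h_orth]
    simp only [mul_ite, mul_one, mul_zero, Finset.sum_ite_eq', Finset.mem_univ, if_true]
    exact Finset.sum_congr rfl fun i _ => by ring
  have hγvv : (inner ℝ (γ v) (γ v) : ℝ) = ∑ i, μ i * c i ^ 2 := by
    rw [← hc]
    simp only [map_sum, map_smul, inner_sum, sum_inner, inner_smul_left, inner_smul_right,
      h_eig, RCLike.star_def, starRingEnd_apply, star_trivial]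
    simp only [mul_ite, mul_zero, Finset.sum_ite_eq', Finset.mem_univ, if_true]
    exact Finset.sum_congr rfl fun i _ => by ring
  have hcne : c ≠ 0 := by
    intro h
    exact hv_ne (by rw [← hc, h]; simp)
  obtain ⟨i1, hi1⟩ := Function.ne_iff.mp hcne
  have hsumpos : 0 < ∑ i, c i ^ 2 :=
    Finset.sum_pos' (fun j _ => sq_nonneg _)
      ⟨i1, Finset.mem_univ i1, (sq_nonneg _).lt_of_ne ((pow_ne_zero 2 hi1).symm)⟩
  set i0 : Fin k := ⟨k - 1, by omega⟩
  have hμle : ∀ i : Fin k, μ i0 ≤ μ i := fun i => hμ_anti (by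
    show i ≤ i0; rw [Fin.le_def]; simp only [i0]; omega)
  have h1 : μ i0 * ∑ i, c i ^ 2 ≤ ∑ i, μ i * c i ^ 2 := by
    rw [Finset.mul_sum]
    exact Finset.sum_le_sum fun i _ => mul_le_mul_of_nonneg_right (hμle i) (sq_nonneg _)
  have h2 : ∑ i, μ i * c i ^ 2 ≤ Ch ^ 2 * ∑ i, c i ^ 2 := by
    have hb := hCh_bound v
    rw [hv_ker, sub_zero] at hb
    have : ‖γ v‖ ^ 2 ≤ (Ch * Real.sqrt (a v v)) ^ 2 :=
      pow_le_pow_left₀ (norm_nonneg _) hb 2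
    rw [mul_pow, Real.sq_sqrt (ha_psd v), havv] at this
    calc ∑ i, μ i * c i ^ 2 = (inner ℝ (γ v) (γ v) : ℝ) := hγvv.symm
      _ = ‖γ v‖ ^ 2 := real_inner_self_eq_norm_sq _
      _ ≤ Ch ^ 2 * ∑ i, c i ^ 2 := this
  have := h1.trans h2
  exact le_of_mul_le_mul_right (by linarith [this]) hsumpos
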